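/- Let δ = ±1, let k₀, k₁, k₂ ∈ ℝ \ {0}, k₃ ∈ ℝ, let ν ∈ ℝ with ν ≠ 0, and let q : ℝ² → ℝ be a smooth function of (u_x, v_x) with k₂·q_{v_x} − k₁·q_{u_x} ≠ 0 everywhere. Let u, v : U → ℝ be smooth functions on an open set U ⊆ ℝ² satisfying on U: u_{xt} = δ·((q·q_{v_x} + k₀²k₁(k₁v_x + k₂u_x))/(k₂q_{v_x} − k₁q_{u_x}))·(k₁v + k₂u + k₃), v_{xt} = −δ·((q·q_{u_x} + k₀²k₂(k₁v_x + k₂u_x))/(k₂q_{v_x} − k₁q_{u_x}))·(k₁v + k₂u + k₃), where q and its partial derivatives are evaluated at (u_x, v_x). Define F₁₁ = (δ/ν)k₀(k₁v_x + k₂u_x), F₁₂ = 0, F₂₁ = (1/ν)q(u_x, v_x), F₂₂ = ν, F₃₁ = 0, F₃₂ = k₀(k₁v + k₂u + k₃). Then on U the structure equations hold: −∂_t F₁₁ + ∂_x F₁₂ = F₃₁F₂₂ − F₃₂F₂₁, −∂_t F₂₁ + ∂_x F₂₂ = F₁₁F₃₂ − F₁₂F₃₁, −∂_t F₃₁ +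 ∂_x F₃₂ = δ(F₁₁F₂₂ − F₁₂F₂₁); hence this family of systems, which generalizes the Konno–Oono coupled dispersionless system, describes pseudospherical surfaces (δ = 1), resp. spherical surfaces (δ = −1), with these associated functions. -/

import Mathlib

/-! The right-hand sides of the system are built so that, for the numerators `A`, `B` of the
two equations and `D = k₂ q_{v_x} - k₁ q_{u_x}`, one has `k₂ A - k₁ B = q D` and
`q_{u_x} A - q_{v_x} B = -k₀² (k₁ v_x + k₂ u_x) D`. Hence along solutions
`∂_t (k₁ v_x + k₂ u_x) = δ q (k₁ v + k₂ u + k₃)` and, by the chain rule,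
`∂_t q = -δ k₀² (k₁ v_x + k₂ u_x) (k₁ v + k₂ u + k₃)`. Substituting these into the structure
equations leaves only `δ² = 1`. -/

open Real

/-- Partial derivative in the `x` direction of a function on the `(x, t)` plane. -/
noncomputable def pdx (f : ℝ × ℝ → ℝ) (p : ℝ × ℝ) : ℝ := fderiv ℝ f p (1, 0)

/-- Partial derivative in the `t` direction of a function on the `(x, t)` plane. -/
noncomputable def pdt (f : ℝ × ℝ → ℝ) (p : ℝ × ℝ) : ℝ := fderiv ℝ f p (0, 1)

/-- The structure equations of a surface of constant Gaussian curvature `-δ`. -/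
def StructEqs (δ : ℝ) (U : Set (ℝ × ℝ)) (F11 F12 F21 F22 F31 F32 : ℝ × ℝ → ℝ) : Prop :=
  ∀ p ∈ U,
    -(pdt F11 p) + pdx F12 p = F31 p * F22 p - F32 p * F21 p ∧
    -(pdt F21 p) + pdx F22 p = F11 p * F32 p - F12 p * F31 p ∧
    -(pdt F31 p) + pdx F32 p = δ * (F11 p * F22 p - F12 p * F21 p)

/-- Partial derivative of a function of two real variables with respect to the first variable. -/
noncomputable def d1 (f : ℝ × ℝ → ℝ) (q : ℝ × ℝ) : ℝ := fderiv ℝ f q (1, 0)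

/-- Partial derivative of a function of two real variables with respect to the second variable. -/
noncomputable def d2 (f : ℝ × ℝ → ℝ) (q : ℝ × ℝ) : ℝ := fderiv ℝ f q (0, 1)

theorem ContinuousLinearMap.apply_prod_eq (L : ℝ × ℝ →L[ℝ] ℝ) (x y : ℝ) :
    L (x, y) = x * L (1, 0) + y * L (0, 1) := by
  have h : ((x, y) : ℝ × ℝ) = x • (1, 0) + y • (0, 1) := by simp
  rw [h, map_add, map_smul, map_smul, smul_eq_mul, smul_eq_mul]

theorem pdx_const (c : ℝ) (p : ℝ × ℝ) : pdx (fun _ => c) p = 0 := by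
  simp [pdx]

theorem pdt_const (c : ℝ) (p : ℝ × ℝ) : pdt (fun _ => c) p = 0 := by
  simp [pdt]

section
variable {f g : ℝ × ℝ → ℝ} {p : ℝ × ℝ}

theorem fderiv_comp_prodMk_apply {F : ℝ × ℝ → ℝ} (hF : DifferentiableAt ℝ F (f p, g p))
    (hf : DifferentiableAt ℝ f p) (hg : DifferentiableAt ℝ g p) (h : ℝ × ℝ) :
    fderiv ℝ (fun w => F (f w, g w)) p h
      = d1 F (f p, g p) * fderiv ℝ f p h + d2 F (f p, g p) * fderiv ℝ g p h := by
  have hFfg : HasFDerivAt (fun w => F (f w, g w))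
      ((fderiv ℝ F (f p, g p)).comp ((fderiv ℝ f p).prod (fderiv ℝ g p))) p :=
    hF.hasFDerivAt.comp p (hf.hasFDerivAt.prodMk hg.hasFDerivAt)
  rw [hFfg.fderiv, ContinuousLinearMap.comp_apply, ContinuousLinearMap.prod_apply,
    ContinuousLinearMap.apply_prod_eq, d1, d2]
  ring

theorem fderiv_const_mul_linear_comb_apply (hf : DifferentiableAt ℝ f p)
    (hg : DifferentiableAt ℝ g p) (c a b e : ℝ) (h : ℝ × ℝ) :
    fderiv ℝ (fun w => c * (a * f w + b * g w + e)) p h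
      = c * (a * fderiv ℝ f p h + b * fderiv ℝ g p h) := by
  have hfg : HasFDerivAt (fun w => c * (a * f w + b * g w + e))
      (c • (a • fderiv ℝ f p + b • fderiv ℝ g p)) p :=
    ((hf.hasFDerivAt.const_mul a).add (hg.hasFDerivAt.const_mul b)).add_const e |>.const_mul c
  rw [hfg.fderiv]
  simp only [smul_apply, add_apply, smul_eq_mul]

end

theorem ContDiffOn.differentiableAt_pdx {u : ℝ × ℝ → ℝ} {U : Set (ℝ × ℝ)} {p : ℝ × ℝ}
    (hu : ContDiffOn ℝ 2 u U) (hU : IsOpen U) (hp : p ∈ U) :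
    DifferentiableAt ℝ (pdx u) p :=
  ((hu.fderiv_of_isOpen hU (m := 1) (by norm_num)).clm_apply contDiffOn_const).differentiableOn
    one_ne_zero p hp |>.differentiableAt (hU.mem_nhds hp)

theorem kodis_flow_identities {δ k0 k1 k2 q qu qv L S ut vt : ℝ} (hD : k2 * qv - k1 * qu ≠ 0)
    (hut : ut = δ * ((q * qv + k0 ^ 2 * k1 * L) / (k2 * qv - k1 * qu)) * S)
    (hvt : vt = -δ * ((q * qu + k0 ^ 2 * k2 * L) / (k2 * qv - k1 * qu)) * S) :
    k1 * vt + k2 * ut = δ * S * q ∧ qu * ut + qv * vt = -δ * k0 ^ 2 * L * S := by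
  have hD' := mul_inv_cancel₀ hD
  constructor
  · rw [hut, hvt]
    linear_combination δ * S * q * hD'
  · rw [hut, hvt]
    linear_combination -δ * k0 ^ 2 * L * S * hD'

theorem corollary_classe5parametrosKODIS_describes_pss_ss_general (δ k0 k1 k2 k3 ν : ℝ)
    (hδ : δ = 1 ∨ δ = -1) (hν : ν ≠ 0)
    (qf : ℝ × ℝ → ℝ) (hqf : ContDiff ℝ (⊤ : ℕ∞) qf)
    (hW : ∀ w : ℝ × ℝ, k2 * d2 qf w - k1 * d1 qf w ≠ 0)
    (U : Set (ℝ × ℝ)) (hU : IsOpen U)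
    (u v : ℝ × ℝ → ℝ)
    (hu : ContDiffOn ℝ (⊤ : ℕ∞) u U) (hv : ContDiffOn ℝ (⊤ : ℕ∞) v U)
    (heq1 : ∀ p ∈ U, pdt (pdx u) p =
      δ * ((qf (pdx u p, pdx v p) * d2 qf (pdx u p, pdx v p)
              + k0 ^ 2 * k1 * (k1 * pdx v p + k2 * pdx u p)) /
            (k2 * d2 qf (pdx u p, pdx v p) - k1 * d1 qf (pdx u p, pdx v p))) *
        (k1 * v p + k2 * u p + k3))
    (heq2 : ∀ p ∈ U, pdt (pdx v) p =
      -δ * ((qf (pdx u p, pdx v p) * d1 qf (pdx u p, pdx v p)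
              + k0 ^ 2 * k2 * (k1 * pdx v p + k2 * pdx u p)) /
            (k2 * d2 qf (pdx u p, pdx v p) - k1 * d1 qf (pdx u p, pdx v p))) *
        (k1 * v p + k2 * u p + k3)) :
    StructEqs δ U
      (fun w => δ / ν * k0 * (k1 * pdx v w + k2 * pdx u w))
      (fun _ => 0)
      (fun w => 1 / ν * qf (pdx u w, pdx v w))
      (fun _ => ν)
      (fun _ => 0)
      (fun w => k0 * (k1 * v w + k2 * u w + k3)) := by
  intro p hp
  have hux := (hu.of_le (by norm_cast)).differentiableAt_pdx hU hp
  have hvx := (hv.of_le (by norm_cast)).differentiableAt_pdx hU hp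
  have hud := (hu.contDiffAt (hU.mem_nhds hp)).differentiableAt (by simp)
  have hvd := (hv.contDiffAt (hU.mem_nhds hp)).differentiableAt (by simp)
  have hq := (hqf.differentiable (by simp)) (pdx u p, pdx v p)
  have hF11 : pdt (fun w => δ / ν * k0 * (k1 * pdx v w + k2 * pdx u w)) p
      = δ / ν * k0 * (k1 * pdt (pdx v) p + k2 * pdt (pdx u) p) := by
    simpa [pdt] using fderiv_const_mul_linear_comb_apply hvx hux (δ / ν * k0) k1 k2 0 (0, 1)
  have hF21 : pdt (fun w => 1 / ν * qf (pdx u w, pdx v w)) p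
      = 1 / ν * (d1 qf (pdx u p, pdx v p) * pdt (pdx u) p
          + d2 qf (pdx u p, pdx v p) * pdt (pdx v) p) := by
    have hqc : DifferentiableAt ℝ (fun w => qf (pdx u w, pdx v w)) p := hq.comp p (hux.prodMk hvx)
    rw [pdt, fderiv_const_mul hqc, smul_apply, smul_eq_mul,
      fderiv_comp_prodMk_apply hq hux hvx, pdt, pdt]
  have hF32 : pdx (fun w => k0 * (k1 * v w + k2 * u w + k3)) p
      = k0 * (k1 * pdx v p + k2 * pdx u p) :=
    fderiv_const_mul_linear_comb_apply hvd hud k0 k1 k2 k3 (1, 0)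
  have hδ2 : δ * δ = 1 := by rcases hδ with rfl | rfl <;> norm_num
  obtain ⟨hLt, hqt⟩ := kodis_flow_identities (hW _) (heq1 p hp) (heq2 p hp)
  set q := qf (pdx u p, pdx v p)
  set L := k1 * pdx v p + k2 * pdx u p
  set S := k1 * v p + k2 * u p + k3
  refine ⟨?_, ?_, ?_⟩
  · rw [hF11, hLt, pdx_const]
    linear_combination (-k0 * S * q / ν) * hδ2
  · rw [hF21, hqt, pdx_const]
    ring
  · rw [hF32, pdt_const]
    linear_combination (-k0 * L) * hδ2 + (-δ ^ 2 * k0 * L) * mul_inv_cancel₀ hν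

/-- The family of systems (41), generalizing the Konno–Oono coupled dispersionless system,
describes pseudospherical surfaces (`δ = 1`), resp. spherical surfaces (`δ = −1`). -/
theorem corollary_classe5parametrosKODIS_describes_pss_ss (δ k0 k1 k2 k3 ν : ℝ)
    (hδ : δ = 1 ∨ δ = -1) (hk0 : k0 ≠ 0) (hk1 : k1 ≠ 0) (hk2 : k2 ≠ 0) (hν : ν ≠ 0)
    (qf : ℝ × ℝ → ℝ) (hqf : ContDiff ℝ (⊤ : ℕ∞) qf)
    (hW : ∀ w : ℝ × ℝ, k2 * d2 qf w - k1 * d1 qf w ≠ 0)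
    (U : Set (ℝ × ℝ)) (hU : IsOpen U)
    (u v : ℝ × ℝ → ℝ)
    (hu : ContDiffOn ℝ (⊤ : ℕ∞) u U) (hv : ContDiffOn ℝ (⊤ : ℕ∞) v U)
    (heq1 : ∀ p ∈ U, pdt (pdx u) p =
      δ * ((qf (pdx u p, pdx v p) * d2 qf (pdx u p, pdx v p)
              + k0 ^ 2 * k1 * (k1 * pdx v p + k2 * pdx u p)) /
            (k2 * d2 qf (pdx u p, pdx v p) - k1 * d1 qf (pdx u p, pdx v p))) *
        (k1 * v p + k2 * u p + k3))
    (heq2 : ∀ p ∈ U, pdt (pdx v) p =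
      -δ * ((qf (pdx u p, pdx v p) * d1 qf (pdx u p, pdx v p)
              + k0 ^ 2 * k2 * (k1 * pdx v p + k2 * pdx u p)) /
            (k2 * d2 qf (pdx u p, pdx v p) - k1 * d1 qf (pdx u p, pdx v p))) *
        (k1 * v p + k2 * u p + k3)) :
    StructEqs δ U
      (fun w => δ / ν * k0 * (k1 * pdx v w + k2 * pdx u w))
      (fun _ => 0)
      (fun w => 1 / ν * qf (pdx u w, pdx v w))
      (fun _ => ν)
      (fun _ => 0)
      (fun w => k0 * (k1 * v w + k2 * u w + k3)) :=
  corollary_classe5parametrosKODIS_describes_pss_ss_general δ k0 k1 k2 k3 ν hδ hν qf hqf hW U hU u v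
    hu hv heq1 heq2
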